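/- Suppose Z(t) has regenerative increments over T_n with E[T_1] < ∞ and E[|Z(T_1)|] < ∞. Then Z(t)/t → a := E[Z(T_1)]/E[T_1] almost surely as t → ∞ if and only if E[M_1] < ∞. -/

import Mathlib

open MeasureTheory ProbabilityTheory Filter Set Topology
open scoped ENNReal NNReal

noncomputable section

variable {Ω : Type*} [MeasurableSpace Ω]

/-- The renewal times `T n = ξ 1 + ⋯ + ξ n` (here `ξ i` in Lean is `ξ_{i+1}` in math). -/
def rT (ξ : ℕ → Ω → ℝ) (n : ℕ) (ω : Ω) : ℝ := ∑ i ∈ Finset.range n, ξ i ω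

/-- `N(t) = max {n : T n ≤ t}`. -/
def rN (ξ : ℕ → Ω → ℝ) (t : ℝ) (ω : Ω) : ℕ := sSup {n : ℕ | rT ξ n ω ≤ t}

/-- The `n`-th regenerative increment `ζ_{n+1} = (ξ_{n+1}, (Z(t + T_n) - Z(T_n))_{0 ≤ t ≤ ξ_{n+1}})`,
the path being stopped at `ξ_{n+1}`. -/
def rIncr (ξ : ℕ → Ω → ℝ) (Z : ℝ → Ω → ℝ) (n : ℕ) (ω : Ω) : ℝ × (ℝ → ℝ) :=
  (ξ n ω, fun s => Z (min (max s 0) (ξ n ω) + rT ξ n ω) ω - Z (rT ξ n ω) ω)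

/-- `M_{n+1} = sup_{T_n ≤ s ≤ T_{n+1}} |Z(s) - Z(T_n)|`, as an extended real. -/
def rM (ξ : ℕ → Ω → ℝ) (Z : ℝ → Ω → ℝ) (n : ℕ) (ω : Ω) : ℝ≥0∞ :=
  ⨆ s ∈ Set.Icc (rT ξ n ω) (rT ξ (n + 1) ω), ENNReal.ofReal |Z s ω - Z (rT ξ n ω) ω|

/-- `Z` is a càdlàg process with `Z(0) = 0` having regenerative increments over the
renewal times `T n` built from the positive interarrival times `ξ`. -/
def RegenIncrements (μ : Measure Ω) (ξ : ℕ → Ω → ℝ) (Z : ℝ → Ω → ℝ) : Prop :=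
  (∀ n ω, 0 < ξ n ω) ∧
  (∀ ω, Z 0 ω = 0) ∧
  (∀ ω t, ContinuousWithinAt (fun s => Z s ω) (Set.Ici t) t) ∧
  (∀ ω t, 0 < t → ∃ l : ℝ, Filter.Tendsto (fun s => Z s ω) (nhdsWithin t (Set.Iio t)) (nhds l)) ∧
  iIndepFun (rIncr ξ Z) μ ∧
  (∀ n, IdentDistrib (rIncr ξ Z n) (rIncr ξ Z 0) μ μ)



/-!
The renewal times `T n` and the values `Z (T n)` are sums of i.i.d. cycle variables, so by the
strong law `T n / n → E ξ₁` and `Z (T n) / n → E Z(T₁)`. Right-continuity makes the cycle maxima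
`M n` measurable functionals of the cycles, hence i.i.d. copies of `M₁`. Between two renewals,
`Z t` differs from `Z (T (N t))` by at most `M (N t)`, where `T (N t) ≤ t < T (N t + 1)`.
If `E M₁ < ∞`, the first Borel–Cantelli lemma gives `M n = o(n)` a.s., and `Z t / t → a`
follows. If `E M₁ = ∞`, the second Borel–Cantelli lemma gives `M n > C n` infinitely often for
every `C`, whereas `Z t / t → a` forces `M n = O(n)`.
-/

theorem tsum_ite_natCast_lt_eq_ceil {x : ℝ≥0∞} (hx : x ≠ ⊤) :
    ∑' n : ℕ, (if (n : ℝ≥0∞) < x then (1 : ℝ≥0∞) else 0) = ⌈x.toReal⌉₊ := by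
  have hmem : ∀ n : ℕ, (n : ℝ≥0∞) < x ↔ n ∈ Finset.range ⌈x.toReal⌉₊ := fun n => by
    rw [Finset.mem_range, Nat.lt_ceil, ← ENNReal.ofReal_lt_iff_lt_toReal n.cast_nonneg hx,
      ENNReal.ofReal_natCast]
  simp_rw [hmem]
  rw [tsum_eq_sum (s := Finset.range ⌈x.toReal⌉₊) fun n hn => if_neg hn,
    Finset.sum_congr rfl fun n hn => if_pos hn]
  simp

theorem le_tsum_ite_natCast_lt (x : ℝ≥0∞) :
    x ≤ ∑' n : ℕ, if (n : ℝ≥0∞) < x then 1 else 0 := by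
  rcases eq_or_ne x ⊤ with rfl | hx
  · simp
  rw [tsum_ite_natCast_lt_eq_ceil hx]
  conv_lhs => rw [← ENNReal.ofReal_toReal hx]
  rw [← ENNReal.ofReal_natCast]
  exact ENNReal.ofReal_le_ofReal (Nat.le_ceil _)

theorem tsum_ite_natCast_lt_le (x : ℝ≥0∞) :
    (∑' n : ℕ, if (n : ℝ≥0∞) < x then 1 else 0) ≤ x + 1 := by
  rcases eq_or_ne x ⊤ with rfl | hx
  · simp
  rw [tsum_ite_natCast_lt_eq_ceil hx]
  conv_rhs => rw [← ENNReal.ofReal_toReal hx]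
  rw [← ENNReal.ofReal_natCast, ← ENNReal.ofReal_one,
    ← ENNReal.ofReal_add ENNReal.toReal_nonneg zero_le_one]
  exact ENNReal.ofReal_le_ofReal (Nat.ceil_lt_add_one ENNReal.toReal_nonneg).le

section TailSum

variable {μ : Measure Ω} {f : Ω → ℝ≥0∞} {c : ℝ}

theorem tsum_measure_ofReal_mul_lt (hf : AEMeasurable f μ) (hc : 0 < c) :
    ∑' n : ℕ, μ {ω | ENNReal.ofReal (c * n) < f ω} =
      ∫⁻ ω, ∑' n : ℕ, (if (n : ℝ≥0∞) < f ω / ENNReal.ofReal c then 1 else 0) ∂μ := by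
  set g := fun ω => f ω / ENNReal.ofReal c
  have hset : ∀ n : ℕ, {ω | ENNReal.ofReal (c * n) < f ω} = {ω | (n : ℝ≥0∞) < g ω} :=
    fun n => by
      ext ω
      rw [mem_ofPred_eq, mem_ofPred_eq, ENNReal.lt_div_iff_mul_lt (by simp [hc])
        (Or.inl ENNReal.ofReal_ne_top), ENNReal.ofReal_mul hc.le, ENNReal.ofReal_natCast,
        mul_comm]
  have hnull : ∀ n : ℕ, NullMeasurableSet {ω | (n : ℝ≥0∞) < g ω} μ :=
    fun n => nullMeasurableSet_lt aemeasurable_const (hf.div_const _)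
  calc ∑' n : ℕ, μ {ω | ENNReal.ofReal (c * n) < f ω}
      = ∑' n : ℕ, ∫⁻ ω, {ω | (n : ℝ≥0∞) < g ω}.indicator 1 ω ∂μ := by
        simp_rw [hset, lintegral_indicator_one₀ (hnull _)]
    _ = ∫⁻ ω, ∑' n : ℕ, {ω | (n : ℝ≥0∞) < g ω}.indicator 1 ω ∂μ :=
        (lintegral_tsum fun n => aemeasurable_one.indicator₀ (hnull n)).symm
    _ = _ := by simp only [Set.indicator_apply, mem_ofPred_eq, Pi.one_apply, g]

theorem tsum_measure_ofReal_mul_lt_ne_top [IsFiniteMeasure μ] (hf : AEMeasurable f μ)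
    (hc : 0 < c) (hfin : ∫⁻ ω, f ω ∂μ ≠ ∞) :
    ∑' n : ℕ, μ {ω | ENNReal.ofReal (c * n) < f ω} ≠ ∞ := by
  rw [tsum_measure_ofReal_mul_lt hf hc]
  refine ne_top_of_le_ne_top ?_ (lintegral_mono fun ω => tsum_ite_natCast_lt_le _)
  simp_rw [div_eq_mul_inv]
  rw [lintegral_add_right' _ aemeasurable_const, lintegral_mul_const'' _ hf, lintegral_const]
  exact ENNReal.add_ne_top.2 ⟨ENNReal.mul_ne_top hfin (by simp [hc]),
    ENNReal.mul_ne_top ENNReal.one_ne_top (measure_ne_top μ _)⟩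

theorem tsum_measure_ofReal_mul_lt_eq_top (hf : AEMeasurable f μ) (hc : 0 < c)
    (hinf : ∫⁻ ω, f ω ∂μ = ∞) :
    ∑' n : ℕ, μ {ω | ENNReal.ofReal (c * n) < f ω} = ∞ := by
  rw [tsum_measure_ofReal_mul_lt hf hc, eq_top_iff]
  calc ∞ = (∫⁻ ω, f ω ∂μ) * (ENNReal.ofReal c)⁻¹ := by
        rw [hinf, ENNReal.top_mul (ENNReal.inv_ne_zero.2 ENNReal.ofReal_ne_top)]
    _ = ∫⁻ ω, f ω / ENNReal.ofReal c ∂μ := by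
        simp_rw [div_eq_mul_inv]; exact (lintegral_mul_const'' _ hf).symm
    _ ≤ _ := lintegral_mono fun ω => le_tsum_ite_natCast_lt _

end TailSum

section BorelCantelli

variable {μ : Measure Ω}

theorem ProbabilityTheory.iIndepFun.iIndepSet_preimage {ι β : Type*} [MeasurableSpace β]
    {f : ι → Ω → β} (hf : iIndepFun f μ) {s : ι → Set β} (hs : ∀ i, MeasurableSet (s i)) :
    iIndepSet (fun i => f i ⁻¹' s i) μ :=
  iIndep_comap_mem_iff.1 (hf.comp (fun i x => x ∈ s i) fun i => measurableSet_setOfPred.1 (hs i))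

theorem ProbabilityTheory.iIndepFun.ae_frequently_mem_of_tsum_eq_top {β : Type*}
    [MeasurableSpace β] {f : ℕ → Ω → β} (hf : iIndepFun f μ) (hmeas : ∀ n, AEMeasurable (f n) μ)
    {s : ℕ → Set β} (hs : ∀ n, MeasurableSet (s n)) (hsum : ∑' n, μ (f n ⁻¹' s n) = ∞) :
    ∀ᵐ ω ∂μ, ∃ᶠ n in atTop, f n ω ∈ s n := by
  set g := fun n => (hmeas n).mk (f n)
  have hfg : ∀ n, f n =ᵐ[μ] g n := fun n => (hmeas n).ae_eq_mk
  have hA : iIndepSet (fun n => g n ⁻¹' s n) μ := (iIndepFun.congr hfg hf).iIndepSet_preimage hs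
  have : IsProbabilityMeasure μ := hA.isProbabilityMeasure
  have hmeasA : ∀ n, MeasurableSet (g n ⁻¹' s n) := fun n => (hmeas n).measurable_mk (hs n)
  have hone : μ (limsup (fun n => g n ⁻¹' s n) atTop) = 1 := by
    refine measure_limsup_eq_one hmeasA hA ?_
    simpa only [measure_congr ((hfg _).preimage _)] using hsum
  have hg : ∀ᵐ ω ∂μ, ∃ᶠ n in atTop, g n ω ∈ s n :=
    ((ae_iff_measure_eq (MeasurableSet.measurableSet_limsup hmeasA).nullMeasurableSet).2
      (hone.trans measure_univ.symm)).mono fun ω hω => mem_limsup_iff_frequently_mem.1 hω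
  filter_upwards [hg, ae_all_iff.2 hfg] with ω hω hfgω
  simpa only [hfgω] using hω

end BorelCantelli

section IdentDistrib

variable {μ : Measure Ω} {M : ℕ → Ω → ℝ≥0∞}

theorem ae_forall_eventually_le_ofReal_mul_of_lintegral_ne_top [IsFiniteMeasure μ]
    (hM : ∀ n, IdentDistrib (M n) (M 0) μ μ) (hfin : ∫⁻ ω, M 0 ω ∂μ ≠ ∞) :
    ∀ᵐ ω ∂μ, ∀ ε > 0, ∀ᶠ n : ℕ in atTop, M n ω ≤ ENNReal.ofReal (ε * n) := by
  have hk : ∀ k : ℕ, ∀ᵐ ω ∂μ, ∀ᶠ n : ℕ in atTop, M n ω ≤ ENNReal.ofReal (1 / (k + 1) * n) :=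
    fun k => by
      have hsum : ∑' n : ℕ, μ (M n ⁻¹' Ioi (ENNReal.ofReal (1 / (k + 1) * n))) ≠ ∞ := by
        rw [tsum_congr fun n => (hM n).measure_mem_eq measurableSet_Ioi]
        exact tsum_measure_ofReal_mul_lt_ne_top (hM 0).aemeasurable_fst
          Nat.one_div_pos_of_nat hfin
      filter_upwards [ae_eventually_notMem hsum] with ω hω
      simpa only [mem_preimage, mem_Ioi, not_lt] using hω
  filter_upwards [ae_all_iff.2 hk] with ω hω ε hε
  obtain ⟨k, hkε⟩ := exists_nat_one_div_lt hε
  filter_upwards [hω k] with n hn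
  exact hn.trans (ENNReal.ofReal_le_ofReal (by gcongr))

theorem ae_forall_frequently_ofReal_mul_lt_of_lintegral_eq_top (hind : iIndepFun M μ)
    (hM : ∀ n, IdentDistrib (M n) (M 0) μ μ) (hinf : ∫⁻ ω, M 0 ω ∂μ = ∞) :
    ∀ᵐ ω ∂μ, ∀ C : ℝ, ∃ᶠ n : ℕ in atTop, ENNReal.ofReal (C * n) < M n ω := by
  have hk : ∀ k : ℕ, ∀ᵐ ω ∂μ, ∃ᶠ n : ℕ in atTop, ENNReal.ofReal ((k + 1) * n) < M n ω :=
    fun k => by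
      have hsum : ∑' n : ℕ, μ (M n ⁻¹' Ioi (ENNReal.ofReal ((k + 1) * n))) = ∞ := by
        rw [tsum_congr fun n => (hM n).measure_mem_eq measurableSet_Ioi]
        exact tsum_measure_ofReal_mul_lt_eq_top (hM 0).aemeasurable_fst
          (Nat.cast_add_one_pos k) hinf
      exact hind.ae_frequently_mem_of_tsum_eq_top (fun n => (hM n).aemeasurable_fst)
        (fun n => measurableSet_Ioi) hsum
  filter_upwards [ae_all_iff.2 hk] with ω hω C
  obtain ⟨k, hCk⟩ := exists_nat_ge C
  refine (hω k).mono fun n hn => lt_of_le_of_lt (ENNReal.ofReal_le_ofReal ?_) hn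
  gcongr
  linarith

end IdentDistrib

section Renewal

variable {T : ℕ → ℝ} {z : ℝ → ℝ} {m : ℝ}

theorem tendsto_succ_div_of_tendsto_div (hT : Tendsto (fun n : ℕ => T n / n) atTop (𝓝 m)) :
    Tendsto (fun n : ℕ => T (n + 1) / n) atTop (𝓝 m) := by
  have hshift : Tendsto (fun n : ℕ => T (n + 1) / ((n : ℝ) + 1)) atTop (𝓝 m) := by
    simpa only [Nat.cast_add_one] using (tendsto_add_atTop_iff_nat 1).2 hT
  have hsucc : Tendsto (fun n : ℕ => T (n + 1) / (n + 1) * (1 + 1 / n)) atTop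
      (𝓝 (m * (1 + 0))) :=
    hshift.mul (tendsto_const_nhds.add tendsto_one_div_atTop_nhds_zero_nat)
  rw [add_zero, mul_one] at hsucc
  refine hsucc.congr' ?_
  filter_upwards [eventually_gt_atTop 0] with n hn
  field_simp

theorem tendsto_atTop_of_tendsto_div (hm : 0 < m)
    (hT : Tendsto (fun n : ℕ => T n / n) atTop (𝓝 m)) : Tendsto T atTop atTop := by
  refine (hT.pos_mul_atTop hm tendsto_natCast_atTop_atTop).congr' ?_
  filter_upwards [eventually_gt_atTop 0] with n hn
  field_simp

theorem exists_tendsto_atTop_index (hT : Tendsto T atTop atTop) :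
    ∃ N : ℝ → ℕ, Tendsto N atTop atTop ∧ ∀ᶠ t in atTop, T (N t) ≤ t ∧ t < T (N t + 1) := by
  have hbdd : ∀ t, BddAbove {n | T n ≤ t} := fun t => by
    obtain ⟨K, hK⟩ := eventually_atTop.1 (hT.eventually_gt_atTop t)
    exact ⟨K, fun n hn => not_lt.1 fun hKn => (hK n hKn.le).not_ge hn⟩
  refine ⟨fun t => sSup {n | T n ≤ t}, tendsto_atTop.2 fun k => ?_, ?_⟩
  · filter_upwards [eventually_ge_atTop (T k)] with t ht using le_csSup (hbdd t) ht
  · filter_upwards [eventually_ge_atTop (T 0)] with t ht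
    exact ⟨Nat.sSup_mem ⟨0, ht⟩ (hbdd t),
      lt_of_not_ge fun h => (Nat.lt_succ_self _).not_ge (le_csSup (hbdd t) h)⟩

theorem tendsto_div_of_tendsto_comp_div {b : ℝ} (hm : 0 < m)
    (hT : Tendsto (fun n : ℕ => T n / n) atTop (𝓝 m))
    (hz : Tendsto (fun n : ℕ => z (T n) / n) atTop (𝓝 b))
    (hosc : ∀ ε > 0, ∀ᶠ n : ℕ in atTop, ∀ s ∈ Icc (T n) (T (n + 1)), |z s - z (T n)| ≤ ε * n) :
    Tendsto (fun t => z t / t) atTop (𝓝 (b / m)) := by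
  obtain ⟨N, hN, hNT⟩ := exists_tendsto_atTop_index (tendsto_atTop_of_tendsto_div hm hT)
  have hNpos : ∀ᶠ t in atTop, (0 : ℝ) < N t :=
    (hN.eventually_gt_atTop 0).mono fun t ht => Nat.cast_pos.2 ht
  have htN : Tendsto (fun t => t / N t) atTop (𝓝 m) :=
    tendsto_of_tendsto_of_tendsto_of_le_of_le' (hT.comp hN)
      ((tendsto_succ_div_of_tendsto_div hT).comp hN)
      (by filter_upwards [hNT, hNpos] with t ht hpos
          using div_le_div_of_nonneg_right ht.1 hpos.le)
      (by filter_upwards [hNT, hNpos] with t ht hpos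
          using div_le_div_of_nonneg_right ht.2.le hpos.le)
  have hdev : Tendsto (fun t => (z t - z (T (N t))) / N t) atTop (𝓝 0) := by
    refine Metric.tendsto_nhds.2 fun ε hε => ?_
    filter_upwards [hN.eventually (hosc (ε / 2) (half_pos hε)), hNT, hNpos] with t hosc_t ht hpos
    rw [dist_zero_right, Real.norm_eq_abs, abs_div, abs_of_pos hpos, div_lt_iff₀ hpos]
    linarith [hosc_t t ⟨ht.1, ht.2.le⟩, mul_lt_mul_of_pos_right (half_lt_self hε) hpos]
  have hzN : Tendsto (fun t => z t / N t) atTop (𝓝 b) := by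
    have h := (hz.comp hN).add hdev
    rw [add_zero] at h
    exact h.congr fun t => by simp only [Function.comp_apply]; ring
  refine (hzN.div htN hm.ne').congr' ?_
  filter_upwards [hNpos] with t hpos
  exact div_div_div_cancel_right₀ hpos.ne' _ _

theorem exists_abs_sub_le_mul_of_tendsto_div {a : ℝ} (hm : 0 < m)
    (hT : Tendsto (fun n : ℕ => T n / n) atTop (𝓝 m))
    (hz : Tendsto (fun t => z t / t) atTop (𝓝 a)) :
    ∃ C ≥ 0, ∀ᶠ n : ℕ in atTop, ∀ s ∈ Icc (T n) (T (n + 1)), |z s - z (T n)| ≤ C * n := by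
  have hlin : ∀ᶠ s in atTop, |z s| ≤ (|a| + 1) * s := by
    filter_upwards [hz.abs.eventually (eventually_lt_nhds (lt_add_one |a|)),
      eventually_gt_atTop 0] with s hs hpos
    rw [abs_div, abs_of_pos hpos, div_lt_iff₀ hpos] at hs
    exact hs.le
  obtain ⟨S, hS⟩ := eventually_atTop.1 hlin
  refine ⟨2 * (|a| + 1) * (m + 1), by positivity, ?_⟩
  filter_upwards [(tendsto_atTop_of_tendsto_div hm hT).eventually_ge_atTop S,
    (tendsto_succ_div_of_tendsto_div hT).eventually (eventually_lt_nhds (lt_add_one m)),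
    eventually_gt_atTop 0] with n hTn hsucc hn s hs
  have hn' : (0 : ℝ) < n := Nat.cast_pos.2 hn
  rw [div_lt_iff₀ hn'] at hsucc
  have h1 := hS s (hTn.trans hs.1)
  have h2 := hS _ hTn
  have ha : 0 ≤ |a| + 1 := by positivity
  calc |z s - z (T n)| ≤ |z s| + |z (T n)| := abs_sub _ _
    _ ≤ (|a| + 1) * s + (|a| + 1) * T n := add_le_add h1 h2
    _ ≤ 2 * (|a| + 1) * T (n + 1) := by nlinarith [hs.1, hs.2]
    _ ≤ 2 * (|a| + 1) * (m + 1) * n := by nlinarith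

end Renewal

theorem iSup_ratCast_eq_iSup_of_continuousWithinAt_Ici {α : Type*} [CompleteLattice α]
    [TopologicalSpace α] [ClosedIicTopology α] {f : ℝ → α}
    (hf : ∀ x, ContinuousWithinAt f (Ici x) x) : ⨆ q : ℚ, f q = ⨆ x : ℝ, f x := by
  refine le_antisymm (iSup_le fun q => le_iSup f (q : ℝ)) (iSup_le fun x => ?_)
  have hrat : ∃ᶠ y in 𝓝[>] x, f y ≤ ⨆ q : ℚ, f q := by
    refine frequently_iff.2 fun hU => ?_
    obtain ⟨u, hxu, hU⟩ := mem_nhdsGT_iff_exists_Ioo_subset.1 hU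
    obtain ⟨q, hxq, hqu⟩ := exists_rat_btwn (mem_Ioi.1 hxu)
    exact ⟨q, hU ⟨hxq, hqu⟩, le_iSup (fun q : ℚ => f q) q⟩
  exact le_of_tendsto_of_frequently ((hf x).mono Ioi_subset_Ici_self) hrat

section StoppedPath

variable {α : Type*} {ξ : ℕ → α → ℝ} {Z : ℝ → α → ℝ} {n : ℕ} {ω : α}

theorem rT_zero : rT ξ 0 ω = 0 := by simp [rT]

theorem rT_succ : rT ξ (n + 1) ω = rT ξ n ω + ξ n ω := by simp [rT, Finset.sum_range_succ]

theorem liminf_rIncr_snd :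
    liminf (fun k : ℕ => (rIncr ξ Z n ω).2 k) atTop = Z (rT ξ (n + 1) ω) ω - Z (rT ξ n ω) ω := by
  refine (tendsto_const_nhds.congr' ?_).liminf_eq
  filter_upwards [eventually_ge_atTop ⌈ξ n ω⌉₊] with k hk
  simp only [rIncr]
  rw [max_eq_left k.cast_nonneg, min_eq_right (Nat.ceil_le.1 hk), rT_succ, add_comm]

theorem continuousWithinAt_rIncr_snd (hZ : ∀ t, ContinuousWithinAt (fun s => Z s ω) (Ici t) t)
    (t : ℝ) : ContinuousWithinAt (rIncr ξ Z n ω).2 (Ici t) t := by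
  have hclamp : Continuous fun s : ℝ => min (max s 0) (ξ n ω) + rT ξ n ω := by fun_prop
  refine ((hZ _).comp hclamp.continuousWithinAt fun s hs => ?_).sub continuousWithinAt_const
  simp only [mem_Ici] at hs ⊢
  gcongr

theorem iSup_rIncr_snd_eq_rM (hξ : 0 ≤ ξ n ω) :
    ⨆ s : ℝ, ENNReal.ofReal |(rIncr ξ Z n ω).2 s| = rM ξ Z n ω := by
  refine le_antisymm (iSup_le fun s => ?_) (iSup₂_le fun u hu => ?_)
  · refine le_iSup₂_of_le (min (max s 0) (ξ n ω) + rT ξ n ω) ⟨?_, ?_⟩ le_rfl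
    · simp [hξ]
    · rw [rT_succ]
      linarith [min_le_right (max s 0) (ξ n ω)]
  · refine le_iSup_of_le (u - rT ξ n ω) (le_of_eq ?_)
    rw [rT_succ] at hu
    simp only [rIncr]
    rw [max_eq_left (by linarith [hu.1]), min_eq_left (by linarith [hu.2]), sub_add_cancel]

theorem rM_le_ofReal_iff {c : ℝ} (hc : 0 ≤ c) :
    rM ξ Z n ω ≤ ENNReal.ofReal c ↔
      ∀ s ∈ Icc (rT ξ n ω) (rT ξ (n + 1) ω), |Z s ω - Z (rT ξ n ω) ω| ≤ c := by
  simp only [rM, iSup₂_le_iff, ENNReal.ofReal_le_ofReal_iff hc]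

end StoppedPath

namespace RegenIncrements

variable {μ : Measure Ω} {ξ : ℕ → Ω → ℝ} {Z : ℝ → Ω → ℝ}

theorem exists_measurable_comp_rIncr_eq_rM (hreg : RegenIncrements μ ξ Z) :
    ∃ ψ : ℝ × (ℝ → ℝ) → ℝ≥0∞, Measurable ψ ∧ ∀ n, ψ ∘ rIncr ξ Z n = rM ξ Z n := by
  obtain ⟨hpos, -, hrc, -⟩ := hreg
  refine ⟨fun p => ⨆ q : ℚ, ENNReal.ofReal |p.2 q|,
    Measurable.iSup fun q => ((measurable_pi_apply _).comp measurable_snd).abs.ennreal_ofReal,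
    fun n => funext fun ω => ?_⟩
  have hcont : ∀ t,
      ContinuousWithinAt (fun s => ENNReal.ofReal |(rIncr ξ Z n ω).2 s|) (Ici t) t :=
    fun t => (ENNReal.continuous_ofReal.comp continuous_abs).continuousAt.comp_continuousWithinAt
      (continuousWithinAt_rIncr_snd (hrc ω) t)
  exact (iSup_ratCast_eq_iSup_of_continuousWithinAt_Ici hcont).trans
    (iSup_rIncr_snd_eq_rM (hpos n ω).le)

theorem iIndepFun_rM (hreg : RegenIncrements μ ξ Z) : iIndepFun (rM ξ Z) μ := by
  obtain ⟨ψ, hψ, hψM⟩ := hreg.exists_measurable_comp_rIncr_eq_rM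
  obtain ⟨-, -, -, -, hind, -⟩ := hreg
  simpa only [hψM] using hind.comp (fun _ => ψ) fun _ => hψ

theorem identDistrib_rM (hreg : RegenIncrements μ ξ Z) (n : ℕ) :
    IdentDistrib (rM ξ Z n) (rM ξ Z 0) μ μ := by
  obtain ⟨ψ, hψ, hψM⟩ := hreg.exists_measurable_comp_rIncr_eq_rM
  obtain ⟨-, -, -, -, -, hid⟩ := hreg
  simpa only [hψM] using (hid n).comp hψ

theorem ae_tendsto_rT_div (hreg : RegenIncrements μ ξ Z) (hT : Integrable (ξ 0) μ) :
    ∀ᵐ ω ∂μ, Tendsto (fun n : ℕ => rT ξ n ω / n) atTop (𝓝 (∫ ω, ξ 0 ω ∂μ)) := by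
  obtain ⟨-, -, -, -, hind, hid⟩ := hreg
  exact strong_law_ae_real ξ hT
    (fun _ _ hij => (hind.indepFun hij).comp measurable_fst measurable_fst)
    fun n => (hid n).comp measurable_fst

theorem ae_tendsto_Z_rT_div (hreg : RegenIncrements μ ξ Z)
    (hZT : Integrable (fun ω => Z (rT ξ 1 ω) ω) μ) :
    ∀ᵐ ω ∂μ, Tendsto (fun n : ℕ => Z (rT ξ n ω) ω / n) atTop
      (𝓝 (∫ ω, Z (rT ξ 1 ω) ω ∂μ)) := by
  obtain ⟨-, hZ0, -, -, hind, hid⟩ := hreg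
  -- evaluating the stopped path at its stopping time `p.1` would not be measurable
  set φ : ℝ × (ℝ → ℝ) → ℝ := fun p => liminf (fun k : ℕ => p.2 k) atTop
  have hφ : Measurable φ :=
    Measurable.liminf fun k => (measurable_pi_apply _).comp measurable_snd
  have hX0 : (fun ω => φ (rIncr ξ Z 0 ω)) = fun ω => Z (rT ξ 1 ω) ω := by
    simp only [φ, liminf_rIncr_snd, rT_zero, hZ0, sub_zero]
  have hslln := strong_law_ae_real (fun n ω => φ (rIncr ξ Z n ω)) (hX0 ▸ hZT)
    (fun _ _ hij => (hind.indepFun hij).comp hφ hφ) fun n => (hid n).comp hφ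
  filter_upwards [hslln] with ω hω
  simpa only [φ, liminf_rIncr_snd, Finset.sum_range_sub fun i => Z (rT ξ i ω) ω, rT_zero, hZ0,
    sub_zero, hX0] using hω

end RegenIncrements

/-- given `E[T_1] < ∞` and `E[|Z(T_1)|] < ∞`, the strong LLN `Z(t)/t → a` a.s.
holds if and only if `E[M_1] < ∞`. -/
theorem stmt9 (μ : Measure Ω) [IsProbabilityMeasure μ] (ξ : ℕ → Ω → ℝ) (Z : ℝ → Ω → ℝ)
    (hreg : RegenIncrements μ ξ Z)
    (hT : Integrable (ξ 0) μ)
    (hZT : Integrable (fun ω => Z (rT ξ 1 ω) ω) μ) :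
    (∀ᵐ ω ∂μ, Tendsto (fun t : ℝ => Z t ω / t) atTop
        (𝓝 ((∫ ω, Z (rT ξ 1 ω) ω ∂μ) / ∫ ω, ξ 0 ω ∂μ))) ↔
      ∫⁻ ω, rM ξ Z 0 ω ∂μ < ⊤ := by
  have hξ : ∀ ω, 0 < ξ 0 ω := hreg.1 0
  have hm : 0 < ∫ ω, ξ 0 ω ∂μ := by
    rw [integral_pos_iff_support_of_nonneg (fun ω => (hξ ω).le) hT,
      Function.support_eq_univ fun ω => (hξ ω).ne']
    simp
  refine ⟨fun hslln => lt_top_iff_ne_top.2 fun hinf => ?_, fun hfin => ?_⟩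
  · have hfalse : ∀ᵐ ω ∂μ, False := by
      filter_upwards [hreg.ae_tendsto_rT_div hT, hslln,
        ae_forall_frequently_ofReal_mul_lt_of_lintegral_eq_top hreg.iIndepFun_rM
          hreg.identDistrib_rM hinf] with ω hTω hZω hMω
      obtain ⟨C, hC, hosc⟩ := exists_abs_sub_le_mul_of_tendsto_div
        (T := fun n => rT ξ n ω) (z := fun s => Z s ω) hm hTω hZω
      obtain ⟨n, hlt, hle⟩ := ((hMω C).and_eventually hosc).exists
      exact hlt.not_ge ((rM_le_ofReal_iff (mul_nonneg hC n.cast_nonneg)).2 hle)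
    exact hfalse.exists.elim fun _ => id
  · filter_upwards [hreg.ae_tendsto_rT_div hT, hreg.ae_tendsto_Z_rT_div hZT,
      ae_forall_eventually_le_ofReal_mul_of_lintegral_ne_top hreg.identDistrib_rM
        hfin.ne] with ω hTω hZω hMω
    refine tendsto_div_of_tendsto_comp_div (T := fun n => rT ξ n ω) (z := fun s => Z s ω)
      hm hTω hZω fun ε hε => ?_
    filter_upwards [hMω ε hε] with n hn
    exact (rM_le_ofReal_iff (mul_nonneg hε.le n.cast_nonneg)).1 hn

end
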